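/- Let σ, ω be Radon measures on ℝ and let (T, T*) be a formal operator pair. (a) If (T, T*) is well localized with parameter r ≥ 1, then (T, T*) is essentially well localized with parameter r. (b) If (T, T*) is essentially well localized with parameter r ≥ 0, then (T, T*) is well localized with parameter r + 1. -/

import Mathlib

open MeasureTheory Set Filter
open scoped Classical

noncomputable section

/-- The dyadic interval `[2^k m, 2^k (m+1))`. -/
def dy (k m : ℤ) : Set ℝ := Set.Ico ((2:ℝ)^k * m) ((2:ℝ)^k * (m+1))

/-- The left half of the dyadic interval. -/
def dyL (k m : ℤ) : Set ℝ := dy (k-1) (2*m)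

/-- The right half of the dyadic interval. -/
def dyR (k m : ℤ) : Set ℝ := dy (k-1) (2*m+1)

/-- `I^{(r)}`: the dyadic interval of length `2^r |I|` containing `I = dy k m`. -/
def dyUp (r : ℕ) (k m : ℤ) : Set ℝ := dy (k + r) (Int.fdiv m (2^r))

/-- The pairing `⟨f, g⟩_μ = ∫ f g dμ`. -/
def ip (μ : Measure ℝ) (f g : ℝ → ℝ) : ℝ := ∫ x, f x * g x ∂μ

/-- The `L²(μ)` norm. -/
def nrm (μ : Measure ℝ) (f : ℝ → ℝ) : ℝ := Real.sqrt (∫ x, f x ^ 2 ∂μ)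

/-- The average `⟨f⟩_s^μ = μ(s)⁻¹ ∫_s f dμ`. -/
def avg (μ : Measure ℝ) (s : Set ℝ) (f : ℝ → ℝ) : ℝ := (μ s).toReal⁻¹ * ∫ x in s, f x ∂μ

/-- The weight-adapted Haar function `h_I^σ` for `I = dy k m`. -/
def haarW (σ : Measure ℝ) (k m : ℤ) : ℝ → ℝ :=
  if σ (dyL k m) ≠ 0 ∧ σ (dyR k m) ≠ 0 then
    fun x =>
      Real.sqrt ((σ (dyL k m)).toReal / ((σ (dy k m)).toReal * (σ (dyR k m)).toReal))
          * (dyR k m).indicator 1 x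
        - Real.sqrt ((σ (dyR k m)).toReal / ((σ (dy k m)).toReal * (σ (dyL k m)).toReal))
          * (dyL k m).indicator 1 x
  else 0

/-- The martingale difference `Δ_I^σ f = ⟨f, h_I^σ⟩_σ · h_I^σ`. -/
def mdiff (σ : Measure ℝ) (k m : ℤ) (f : ℝ → ℝ) : ℝ → ℝ :=
  fun x => ip σ f (haarW σ k m) * haarW σ k m x

/-- `𝒮`: the linear span of the indicators of dyadic intervals. -/
def simpleSpan : Submodule ℝ (ℝ → ℝ) :=
  Submodule.span ℝ {f : ℝ → ℝ | ∃ k m : ℤ, f = (dy k m).indicator 1}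

/-- A formal operator pair `(T, T*)`: linear maps with `T` sending `𝒮_σ` into `L²(ω)`,
`T*` sending `𝒮_ω` into `L²(σ)`, satisfying the duality relation
`⟨T(σf), g⟩_ω = ⟨f, T*(ωg)⟩_σ` on the spans of indicators.  We write `P.T f` for `T(σf)`
and `P.Ts g` for `T*(ωg)`. -/
structure FormalPair (σ ω : Measure ℝ) where
  T : (ℝ → ℝ) →ₗ[ℝ] (ℝ → ℝ)
  Ts : (ℝ → ℝ) →ₗ[ℝ] (ℝ → ℝ)
  memT : ∀ f ∈ simpleSpan, MemLp (T f) 2 ω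
  memTs : ∀ g ∈ simpleSpan, MemLp (Ts g) 2 σ
  adj : ∀ f ∈ simpleSpan, ∀ g ∈ simpleSpan, ∫ x, T f x * g x ∂ω = ∫ x, f x * Ts g x ∂σ

/-- `(T, T*)` is essentially well localized with parameter `r`. -/
def EWL {σ ω : Measure ℝ} (P : FormalPair σ ω) (r : ℕ) : Prop :=
  ∀ k m : ℤ,
    (∀ᵐ x ∂ω, x ∉ dyUp r k m → P.T (haarW σ k m) x = 0) ∧
    (∀ᵐ x ∂σ, x ∉ dyUp r k m → P.Ts (haarW ω k m) x = 0)

/-- `(T, T*)` is well localized (in the sense of Nazarov–Treil–Volberg) with parameter `r`: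
for all `J = dy kJ mJ` and `I = dy kI mI` with `|I| ≤ 2|J|`, the pairing
`⟨T(σ 1_J), h_I^ω⟩_ω` vanishes if `I ⊄ J^{(r)}`, or if `|I| ≤ 2^{-r}|J|` and `I ⊄ J`,
and symmetrically for `T*`. -/
def WL {σ ω : Measure ℝ} (P : FormalPair σ ω) (r : ℕ) : Prop :=
  ∀ kJ mJ kI mI : ℤ, (2:ℝ)^kI ≤ 2 * (2:ℝ)^kJ →
    ((¬ dy kI mI ⊆ dyUp r kJ mJ) ∨ ((2:ℝ)^kI ≤ (2:ℝ)^(-(r:ℤ)) * (2:ℝ)^kJ ∧ ¬ dy kI mI ⊆ dy kJ mJ)) →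
    ip ω (P.T ((dy kJ mJ).indicator 1)) (haarW ω kI mI) = 0 ∧
    ip σ (P.Ts ((dy kJ mJ).indicator 1)) (haarW σ kI mI) = 0

lemma two_zpow_pos' (k : ℤ) : (0:ℝ) < 2^k := zpow_pos (by norm_num) k

lemma dy_subset_fdiv (k m : ℤ) (d : ℕ) : dy k m ⊆ dy (k + d) (Int.fdiv m (2^d)) := by
  have hd : (0:ℤ) < 2^d := by positivity
  rw [Int.fdiv_eq_ediv_of_nonneg _ (le_of_lt hd)]
  intro x hx
  rw [dy, Set.mem_Ico] at hx ⊢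
  obtain ⟨h1, h2⟩ := hx
  have e1 : (2:ℝ)^(k + (d:ℤ)) = 2^k * 2^(d:ℕ) := by
    rw [zpow_add₀ (by norm_num : (2:ℝ) ≠ 0), zpow_natCast]
  have hle : (2:ℤ)^d * (m / 2^d) ≤ m := by
    have := Int.ediv_mul_le m (ne_of_gt hd); linarith [this]
  have hlt : m + 1 ≤ 2^d * (m / 2^d + 1) := by
    have := Int.lt_ediv_add_one_mul_self m hd; linarith [this]
  have hle' : ((2^d * (m / 2^d) : ℤ) : ℝ) ≤ (m : ℝ) := by exact_mod_cast hle
  have hlt' : ((m:ℝ) + 1) ≤ (((2:ℤ)^d * (m / 2^d + 1) : ℤ) : ℝ) := by exact_mod_cast hlt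
  push_cast at hle' hlt'
  have hk := two_zpow_pos' k
  constructor
  · rw [e1]; nlinarith [hle']
  · rw [e1]; nlinarith [hlt']

lemma mem_dy_iff' {x : ℝ} {k m : ℤ} : x ∈ dy k m ↔ ⌊x / 2^k⌋ = m := by
  have h2 := two_zpow_pos' k
  rw [dy, Set.mem_Ico, Int.floor_eq_iff]
  rw [le_div_iff₀ h2, div_lt_iff₀ h2]
  constructor
  · rintro ⟨h1, h3⟩; constructor <;> push_cast <;> nlinarith
  · rintro ⟨h1, h3⟩; constructor <;> push_cast at h1 h3 <;> nlinarith

lemma dy_disjoint {k m m' : ℤ} (h : m ≠ m') : dy k m ∩ dy k m' = ∅ := by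
  ext x
  simp only [Set.mem_inter_iff, Set.mem_empty_iff_false, iff_false, not_and]
  intro h1 h2
  rw [mem_dy_iff'] at h1 h2
  exact h (h1 ▸ h2 ▸ rfl)

lemma two_zpow_succ (k : ℤ) : (2:ℝ)^k = 2 * 2^(k-1) := by
  rw [mul_comm, ← zpow_add_one₀ (by norm_num : (2:ℝ) ≠ 0) (k-1)]; norm_num

lemma measurableSet_dy (k m : ℤ) : MeasurableSet (dy k m) := measurableSet_Ico
lemma dy_ne (k m : ℤ) : (dy k m).Nonempty := by
  refine ⟨(2:ℝ)^k * m, le_refl _, ?_⟩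
  have := two_zpow_pos' k; nlinarith
lemma dy_subset_of_le {k k' m m' : ℤ} (hk : k ≤ k') (h : (dy k m ∩ dy k' m').Nonempty) :
    dy k m ⊆ dy k' m' := by
  obtain ⟨d, hd⟩ : ∃ d : ℕ, k' = k + d := ⟨(k' - k).toNat, by omega⟩
  subst hd
  obtain ⟨x, hx1, hx2⟩ := h
  have hsub := dy_subset_fdiv k m d
  have hx3 := hsub hx1
  have heq : Int.fdiv m (2^d) = m' := by
    by_contra hne
    have hdis := dy_disjoint hne (k := k + d)
    have : x ∈ dy (k + d) (Int.fdiv m (2^d)) ∩ dy (k + d) m' := ⟨hx3, hx2⟩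
    rw [hdis] at this
    exact this
  rwa [heq] at hsub

lemma dy_nest {k k' m m' : ℤ} (h : (dy k m ∩ dy k' m').Nonempty) :
    dy k m ⊆ dy k' m' ∨ dy k' m' ⊆ dy k m := by
  rcases le_total k k' with hk | hk
  · exact Or.inl (dy_subset_of_le hk h)
  · exact Or.inr (dy_subset_of_le hk (by rwa [Set.inter_comm] at h))

lemma dy_union_halves (k m : ℤ) : dy k m = dyL k m ∪ dyR k m := by
  have h2 := two_zpow_pos' (k-1)
  have e : (2:ℝ)^k = 2 * 2^(k-1) := by
    exact two_zpow_succ k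
  ext x
  simp only [dy, dyL, dyR, Set.mem_union, Set.mem_Ico, e]
  constructor
  · rintro ⟨h1, h3⟩
    rcases lt_or_ge x (2 * 2^(k-1) * (m + 1/2)) with hx | hx
    · left; push_cast; constructor <;> nlinarith
    · right; push_cast; constructor <;> nlinarith
  · rintro (⟨h1, h3⟩ | ⟨h1, h3⟩) <;> push_cast at h1 h3 <;> constructor <;> nlinarith

lemma dyL_eq (k m : ℤ) : dyL k m = dy (k-1) (2*m) := rfl
lemma dyR_eq (k m : ℤ) : dyR k m = dy (k-1) (2*m+1) := rfl

lemma dyLR_disjoint (k m : ℤ) : dyL k m ∩ dyR k m = ∅ := dy_disjoint (by omega)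

lemma dy_subset_dyUp (r : ℕ) (k m : ℤ) : dy k m ⊆ dyUp r k m := dy_subset_fdiv k m r
-- PART 2 : measure finiteness, span, MemLp, integrability
variable {μ : Measure ℝ}

lemma meas_dy_lt_top [IsLocallyFiniteMeasure μ] (k m : ℤ) : μ (dy k m) < ⊤ := by
  have h1 : dy k m ⊆ Set.Icc ((2:ℝ)^k * m) ((2:ℝ)^k * (m+1)) := Set.Ico_subset_Icc_self
  exact lt_of_le_of_lt (measure_mono h1) isCompact_Icc.measure_lt_top

lemma ind_mem_span (k m : ℤ) : (dy k m).indicator (1 : ℝ → ℝ) ∈ simpleSpan :=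
  Submodule.subset_span ⟨k, m, rfl⟩

lemma haar_eq_comb (σ : Measure ℝ) (k m : ℤ) (h : σ (dyL k m) ≠ 0 ∧ σ (dyR k m) ≠ 0) :
    haarW σ k m =
      Real.sqrt ((σ (dyL k m)).toReal / ((σ (dy k m)).toReal * (σ (dyR k m)).toReal))
        • (dyR k m).indicator (1 : ℝ → ℝ)
      - Real.sqrt ((σ (dyR k m)).toReal / ((σ (dy k m)).toReal * (σ (dyL k m)).toReal))
        • (dyL k m).indicator (1 : ℝ → ℝ) := by
  rw [haarW, if_pos h]
  rfl

lemma haar_mem_span (σ : Measure ℝ) (k m : ℤ) : haarW σ k m ∈ simpleSpan := by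
  by_cases h : σ (dyL k m) ≠ 0 ∧ σ (dyR k m) ≠ 0
  · rw [haar_eq_comb σ k m h]
    exact sub_mem (Submodule.smul_mem _ _ (Submodule.subset_span ⟨k-1, 2*m+1, rfl⟩))
      (Submodule.smul_mem _ _ (Submodule.subset_span ⟨k-1, 2*m, rfl⟩))
  · rw [haarW, if_neg h]; exact zero_mem _

lemma span_memℒp [IsLocallyFiniteMeasure μ] {f : ℝ → ℝ} (hf : f ∈ simpleSpan) :
    MemLp f 2 μ := by
  induction hf using Submodule.span_induction with
  | mem g hg =>
    obtain ⟨k, m, rfl⟩ := hg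
    exact memLp_indicator_const 2 (measurableSet_dy k m) 1 (Or.inr (meas_dy_lt_top k m).ne)
  | zero => exact MemLp.zero
  | add _ _ _ _ h1 h2 => exact h1.add h2
  | smul c _ _ h1 => exact h1.const_smul c

lemma haar_supp {σ : Measure ℝ} {k m : ℤ} {x : ℝ} (hx : x ∉ dy k m) : haarW σ k m x = 0 := by
  have hL : x ∉ dyL k m := fun h => hx (by rw [dy_union_halves]; exact Or.inl h)
  have hR : x ∉ dyR k m := fun h => hx (by rw [dy_union_halves]; exact Or.inr h)
  rw [haarW]
  split_ifs
  · simp [Set.indicator_of_notMem hL, Set.indicator_of_notMem hR]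
  · rfl

lemma haar_meas (σ : Measure ℝ) (k m : ℤ) : Measurable (haarW σ k m) := by
  rw [haarW]
  split_ifs
  · exact ((measurable_const.indicator (measurableSet_dy _ _)).const_mul _).sub
      ((measurable_const.indicator (measurableSet_dy _ _)).const_mul _)
  · exact measurable_const

lemma haar_bdd (σ : Measure ℝ) (k m : ℤ) : ∃ C, ∀ x, |haarW σ k m x| ≤ C := by
  rw [haarW]
  split_ifs
  · set a := Real.sqrt ((σ (dyL k m)).toReal / ((σ (dy k m)).toReal * (σ (dyR k m)).toReal)) with ha
    set b := Real.sqrt ((σ (dyR k m)).toReal / ((σ (dy k m)).toReal * (σ (dyL k m)).toReal)) with hb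
    have ha0 : 0 ≤ a := Real.sqrt_nonneg _
    have hb0 : 0 ≤ b := Real.sqrt_nonneg _
    refine ⟨a + b, fun x => ?_⟩
    by_cases hR : x ∈ dyR k m <;> by_cases hL : x ∈ dyL k m <;>
      simp only [Set.indicator_of_mem, Set.indicator_of_notMem, hR, hL, Pi.one_apply,
        mul_one, mul_zero, if_true, if_false, abs_le] <;>
      constructor <;> simp_all <;> nlinarith
  · exact ⟨0, fun x => by simp⟩

lemma integrable_mul_supp [IsLocallyFiniteMeasure μ] {g h : ℝ → ℝ} (hg : MemLp g 2 μ)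
    (k m : ℤ) (hmeas : Measurable h) (hbd : ∃ C, ∀ x, |h x| ≤ C)
    (hsupp : ∀ x, x ∉ dy k m → h x = 0) : Integrable (fun x => g x * h x) μ := by
  haveI : IsFiniteMeasure (μ.restrict (dy k m)) :=
    ⟨by rw [Measure.restrict_apply_univ]; exact meas_dy_lt_top k m⟩
  have hind : Integrable ((dy k m).indicator g) μ :=
    (integrable_indicator_iff (measurableSet_dy k m)).mpr ((hg.restrict _).integrable one_le_two)
  have heq : (fun x => g x * h x) = fun x => h x * ((dy k m).indicator g x) := by
    funext x
    by_cases hx : x ∈ dy k m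
    · rw [Set.indicator_of_mem hx, mul_comm]
    · rw [Set.indicator_of_notMem hx, hsupp x hx, mul_zero, mul_zero]
  rw [heq]
  obtain ⟨C, hC⟩ := hbd
  exact hind.bdd_mul hmeas.aestronglyMeasurable (Filter.Eventually.of_forall fun x => by simpa [Real.norm_eq_abs] using hC x)
-- PART 3 : step identity
lemma dy_meas_add [IsLocallyFiniteMeasure μ] (k m : ℤ) :
    (μ (dy k m)).toReal = (μ (dyL k m)).toReal + (μ (dyR k m)).toReal := by
  have : μ (dy k m) = μ (dyL k m) + μ (dyR k m) := by
    rw [dy_union_halves]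
    exact measure_union (Set.disjoint_iff_inter_eq_empty.mpr (dyLR_disjoint k m))
      (measurableSet_dy _ _)
  rw [this, ENNReal.toReal_add]
  · exact (lt_of_le_of_lt (measure_mono (by rw [dy_union_halves]; exact Set.subset_union_left))
      (meas_dy_lt_top k m)).ne
  · exact (lt_of_le_of_lt (measure_mono (by rw [dy_union_halves]; exact Set.subset_union_right))
      (meas_dy_lt_top k m)).ne

lemma sqrt_prod_eq {p q t : ℝ} (hp : 0 < p) (hq : 0 < q) (ht : 0 < t) :
    Real.sqrt (p * q / t) * Real.sqrt (p / (t * q)) = p / t := by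
  rw [← Real.sqrt_mul (by positivity)]
  have : p * q / t * (p / (t * q)) = (p / t)^2 := by field_simp
  rw [this, Real.sqrt_sq (by positivity)]

lemma step_child [IsLocallyFiniteMeasure μ] (k m : ℤ) (left : Bool) :
    ∃ a b : ℝ, ∀ᵐ x ∂μ,
      (if left then dyL k m else dyR k m).indicator (1 : ℝ → ℝ) x
        = a * (dy k m).indicator (1 : ℝ → ℝ) x + b * haarW μ k m x := by
  have hLsub : dyL k m ⊆ dy k m := by rw [dy_union_halves]; exact Set.subset_union_left
  have hRsub : dyR k m ⊆ dy k m := by rw [dy_union_halves]; exact Set.subset_union_right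
  by_cases hK : μ (dy k m) = 0
  · refine ⟨0, 0, ?_⟩
    have h0 : ∀ᵐ x ∂μ, x ∉ dy k m := measure_eq_zero_iff_ae_notMem.mp hK
    filter_upwards [h0] with x hx
    have : x ∉ (if left then dyL k m else dyR k m) := by
      split_ifs <;> intro h <;> [exact hx (hLsub h); exact hx (hRsub h)]
    simp [Set.indicator_of_notMem this]
  by_cases hL : μ (dyL k m) = 0
  · have h0 : ∀ᵐ x ∂μ, x ∉ dyL k m := measure_eq_zero_iff_ae_notMem.mp hL
    cases left with
    | true =>
      refine ⟨0, 0, ?_⟩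
      filter_upwards [h0] with x hx
      simp [Set.indicator_of_notMem hx]
    | false =>
      refine ⟨1, 0, ?_⟩
      filter_upwards [h0] with x hx
      by_cases hxK : x ∈ dy k m
      · have hxR : x ∈ dyR k m := by
          rw [dy_union_halves] at hxK; rcases hxK with h | h; exact absurd h hx; exact h
        simp [Set.indicator_of_mem hxR, Set.indicator_of_mem hxK]
      · have hxR : x ∉ dyR k m := fun h => hxK (hRsub h)
        simp [Set.indicator_of_notMem hxR, Set.indicator_of_notMem hxK]
  by_cases hR : μ (dyR k m) = 0
  · have h0 : ∀ᵐ x ∂μ, x ∉ dyR k m := measure_eq_zero_iff_ae_notMem.mp hR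
    cases left with
    | false =>
      refine ⟨0, 0, ?_⟩
      filter_upwards [h0] with x hx
      simp [Set.indicator_of_notMem hx]
    | true =>
      refine ⟨1, 0, ?_⟩
      filter_upwards [h0] with x hx
      by_cases hxK : x ∈ dy k m
      · have hxL : x ∈ dyL k m := by
          rw [dy_union_halves] at hxK; rcases hxK with h | h; exact h; exact absurd h hx
        simp [Set.indicator_of_mem hxL, Set.indicator_of_mem hxK]
      · have hxL : x ∉ dyL k m := fun h => hxK (hLsub h)
        simp [Set.indicator_of_notMem hxL, Set.indicator_of_notMem hxK]
  -- nondegenerate case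
  have hfin := meas_dy_lt_top (μ := μ) k m
  have hLfin : μ (dyL k m) < ⊤ := lt_of_le_of_lt (measure_mono hLsub) hfin
  have hRfin : μ (dyR k m) < ⊤ := lt_of_le_of_lt (measure_mono hRsub) hfin
  set p := (μ (dyL k m)).toReal with hp'
  set q := (μ (dyR k m)).toReal with hq'
  set t := (μ (dy k m)).toReal with ht'
  have hp : 0 < p := ENNReal.toReal_pos hL hLfin.ne
  have hq : 0 < q := ENNReal.toReal_pos hR hRfin.ne
  have htpq : t = p + q := dy_meas_add k m
  have ht : 0 < t := by rw [htpq]; linarith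
  have hhaar : haarW μ k m = fun x =>
      Real.sqrt (p / (t * q)) * (dyR k m).indicator 1 x
        - Real.sqrt (q / (t * p)) * (dyL k m).indicator 1 x := by
    rw [haarW, if_pos ⟨hL, hR⟩]
  have hdisj : ∀ x, x ∈ dyL k m → x ∉ dyR k m := by
    intro x h1 h2
    have : x ∈ dyL k m ∩ dyR k m := ⟨h1, h2⟩
    rw [dyLR_disjoint] at this; exact this
  have hsum : p / t + q / t = 1 := by field_simp [ht.ne']; linarith [htpq]
  cases left with
  | true =>
    refine ⟨p / t, -Real.sqrt (p * q / t), Filter.Eventually.of_forall fun x => ?_⟩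
    rw [hhaar, if_pos rfl]
    by_cases hxL : x ∈ dyL k m
    · have hxR : x ∉ dyR k m := hdisj x hxL
      have hxK : x ∈ dy k m := hLsub hxL
      simp only [Set.indicator_of_mem hxL, Set.indicator_of_mem hxK,
        Set.indicator_of_notMem hxR, Pi.one_apply, mul_one, mul_zero, zero_sub]
      have e1 : Real.sqrt (p * q / t) * Real.sqrt (q / (t * p)) = q / t := by
        rw [mul_comm p q]; exact sqrt_prod_eq hq hp ht
      nlinarith [e1, hsum]
    · by_cases hxR : x ∈ dyR k m
      · have hxK : x ∈ dy k m := hRsub hxR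
        simp only [Set.indicator_of_mem hxR, Set.indicator_of_mem hxK,
          Set.indicator_of_notMem hxL, Pi.one_apply, mul_one, mul_zero, sub_zero]
        have e1 : Real.sqrt (p * q / t) * Real.sqrt (p / (t * q)) = p / t := sqrt_prod_eq hp hq ht
        nlinarith [e1, hsum]
      · have hxK : x ∉ dy k m := by
          rw [dy_union_halves]; rintro (h | h); exact hxL h; exact hxR h
        simp [Set.indicator_of_notMem hxL, Set.indicator_of_notMem hxR,
          Set.indicator_of_notMem hxK]
  | false =>
    refine ⟨q / t, Real.sqrt (p * q / t), Filter.Eventually.of_forall fun x => ?_⟩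
    rw [hhaar, if_neg (by simp)]
    by_cases hxL : x ∈ dyL k m
    · have hxR : x ∉ dyR k m := hdisj x hxL
      have hxK : x ∈ dy k m := hLsub hxL
      simp only [Set.indicator_of_mem hxL, Set.indicator_of_mem hxK,
        Set.indicator_of_notMem hxR, Pi.one_apply, mul_one, mul_zero, zero_sub]
      have e1 : Real.sqrt (p * q / t) * Real.sqrt (q / (t * p)) = q / t := by
        rw [mul_comm p q]; exact sqrt_prod_eq hq hp ht
      nlinarith [e1, hsum]
    · by_cases hxR : x ∈ dyR k m
      · have hxK : x ∈ dy k m := hRsub hxR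
        simp only [Set.indicator_of_mem hxR, Set.indicator_of_mem hxK,
          Set.indicator_of_notMem hxL, Pi.one_apply, mul_one, mul_zero, sub_zero]
        have e1 : Real.sqrt (p * q / t) * Real.sqrt (p / (t * q)) = p / t := sqrt_prod_eq hp hq ht
        nlinarith [e1, hsum]
      · have hxK : x ∉ dy k m := by
          rw [dy_union_halves]; rintro (h | h); exact hxL h; exact hxR h
        simp [Set.indicator_of_notMem hxL, Set.indicator_of_notMem hxR,
          Set.indicator_of_notMem hxK]
-- PART 4 : integral conversions
lemma mul_ind_eq_indicator (g : ℝ → ℝ) (s : Set ℝ) :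
    (fun x => g x * s.indicator (1 : ℝ → ℝ) x) = s.indicator g := by
  funext x
  by_cases hx : x ∈ s <;> simp [Set.indicator_of_mem, Set.indicator_of_notMem, hx]

lemma ip_ind (g : ℝ → ℝ) {s : Set ℝ} (hs : MeasurableSet s) :
    ∫ x, g x * s.indicator (1 : ℝ → ℝ) x ∂μ = ∫ x in s, g x ∂μ := by
  rw [mul_ind_eq_indicator, integral_indicator hs]

lemma intOn [IsLocallyFiniteMeasure μ] {g : ℝ → ℝ} (hg : MemLp g 2 μ) (k m : ℤ) :
    IntegrableOn g (dy k m) μ := by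
  haveI : IsFiniteMeasure (μ.restrict (dy k m)) :=
    ⟨by rw [Measure.restrict_apply_univ]; exact meas_dy_lt_top k m⟩
  exact (hg.restrict _).integrable one_le_two

lemma setInt_split [IsLocallyFiniteMeasure μ] {g : ℝ → ℝ} (hg : MemLp g 2 μ) (k m : ℤ) :
    ∫ x in dy k m, g x ∂μ = (∫ x in dyL k m, g x ∂μ) + ∫ x in dyR k m, g x ∂μ := by
  rw [dy_union_halves k m]
  exact setIntegral_union (Set.disjoint_iff_inter_eq_empty.mpr (dyLR_disjoint k m))
    (measurableSet_dy _ _) (intOn hg _ _) (intOn hg _ _)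

lemma integ_g_ind [IsLocallyFiniteMeasure μ] {g : ℝ → ℝ} (hg : MemLp g 2 μ) (k m : ℤ) :
    Integrable (fun x => g x * (dy k m).indicator (1 : ℝ → ℝ) x) μ :=
  integrable_mul_supp hg k m (measurable_const.indicator (measurableSet_dy k m))
    ⟨1, fun x => by by_cases hx : x ∈ dy k m <;>
      simp [Set.indicator_of_mem, Set.indicator_of_notMem, hx]⟩
    (fun x hx => Set.indicator_of_notMem hx 1)

lemma integ_g_haar [IsLocallyFiniteMeasure μ] {g : ℝ → ℝ} (hg : MemLp g 2 μ) (k m : ℤ) :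
    Integrable (fun x => g x * haarW μ k m x) μ :=
  integrable_mul_supp hg k m (haar_meas μ k m) (haar_bdd μ k m) (fun _ hx => haar_supp hx)

lemma setInt_child [IsLocallyFiniteMeasure μ] {g : ℝ → ℝ} (hg : MemLp g 2 μ) (k m : ℤ)
    (left : Bool) :
    ∃ a b : ℝ, ∫ x in (if left then dyL k m else dyR k m), g x ∂μ
      = a * (∫ x in dy k m, g x ∂μ) + b * ∫ x, g x * haarW μ k m x ∂μ := by
  obtain ⟨a, b, hab⟩ := step_child (μ := μ) k m left
  refine ⟨a, b, ?_⟩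
  have hmeas : MeasurableSet (if left then dyL k m else dyR k m) := by
    cases left <;> exact measurableSet_dy _ _
  have e1 : ∫ x in (if left then dyL k m else dyR k m), g x ∂μ
      = ∫ x, g x * (if left then dyL k m else dyR k m).indicator (1:ℝ→ℝ) x ∂μ :=
    (ip_ind g hmeas).symm
  have e2 : ∫ x, g x * (if left then dyL k m else dyR k m).indicator (1:ℝ→ℝ) x ∂μ
      = ∫ x, (a * (g x * (dy k m).indicator (1:ℝ→ℝ) x) + b * (g x * haarW μ k m x)) ∂μ := by
    refine integral_congr_ae (hab.mono fun x hx => ?_)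
    simp only []
    rw [hx]; ring
  rw [e1, e2, integral_add ((integ_g_ind hg k m).const_mul a) ((integ_g_haar hg k m).const_mul b),
    MeasureTheory.integral_const_mul, MeasureTheory.integral_const_mul, ip_ind g (measurableSet_dy k m)]

lemma setInt_childL [IsLocallyFiniteMeasure μ] {g : ℝ → ℝ} (hg : MemLp g 2 μ) (k m : ℤ) :
    ∃ a b : ℝ, ∫ x in dyL k m, g x ∂μ
      = a * (∫ x in dy k m, g x ∂μ) + b * ∫ x, g x * haarW μ k m x ∂μ := by
  obtain ⟨a, b, h⟩ := setInt_child hg k m true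
  exact ⟨a, b, by simpa using h⟩

lemma setInt_childR [IsLocallyFiniteMeasure μ] {g : ℝ → ℝ} (hg : MemLp g 2 μ) (k m : ℤ) :
    ∃ a b : ℝ, ∫ x in dyR k m, g x ∂μ
      = a * (∫ x in dy k m, g x ∂μ) + b * ∫ x, g x * haarW μ k m x ∂μ := by
  obtain ⟨a, b, h⟩ := setInt_child hg k m false
  exact ⟨a, b, by simpa using h⟩
-- PART 5a : scale arithmetic and parent/child
lemma two_zpow_le_iff {a b : ℤ} : (2:ℝ)^a ≤ (2:ℝ)^b ↔ a ≤ b :=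
  zpow_le_zpow_iff_right₀ (by norm_num : (1:ℝ) < 2)

lemma two_mul_zpow (b : ℤ) : 2 * (2:ℝ)^b = 2^(b+1) := by
  rw [zpow_add_one₀ (by norm_num : (2:ℝ) ≠ 0)]; ring

lemma scale_le_of_le {a b : ℤ} (h : (2:ℝ)^a ≤ 2 * (2:ℝ)^b) : a ≤ b + 1 := by
  rw [two_mul_zpow] at h
  exact two_zpow_le_iff.mp h

lemma le_scale_of_le {a b : ℤ} (h : a ≤ b + 1) : (2:ℝ)^a ≤ 2 * (2:ℝ)^b := by
  rw [two_mul_zpow]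
  exact two_zpow_le_iff.mpr h

lemma scale_le_of_neg {a b : ℤ} {r : ℕ} (h : (2:ℝ)^a ≤ (2:ℝ)^(-(r:ℤ)) * (2:ℝ)^b) :
    a + r ≤ b := by
  have h2 : (2:ℝ)^(-(r:ℤ)) * (2:ℝ)^b = 2^(b - r) := by
    rw [← zpow_add₀ (by norm_num : (2:ℝ) ≠ 0)]; ring_nf
  rw [h2] at h
  have := two_zpow_le_iff.mp h
  omega

lemma child_of_parent (k m : ℤ) :
    dy k m = dyL (k+1) (Int.fdiv m 2) ∨ dy k m = dyR (k+1) (Int.fdiv m 2) := by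
  rw [Int.fdiv_eq_ediv_of_nonneg _ (by norm_num : (0:ℤ) ≤ 2)]
  rcases Int.emod_two_eq m with h | h
  · left
    rw [dyL_eq, show (k+1)-1 = k from by omega, show 2*(m/2) = m from by omega]
  · right
    rw [dyR_eq, show (k+1)-1 = k from by omega, show 2*(m/2)+1 = m from by omega]

lemma subset_parent (k m : ℤ) : dy k m ⊆ dy (k+1) (Int.fdiv m 2) := by
  rcases child_of_parent k m with h | h
  · rw [h, dyL_eq]
    have : (k+1) - 1 = k := by omega
    rw [dy_union_halves (k+1) (Int.fdiv m 2)]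
    exact Set.subset_union_left
  · rw [h]
    rw [dy_union_halves (k+1) (Int.fdiv m 2)]
    exact Set.subset_union_right

-- if a dyadic interval of scale ≤ that of Q meets Q, it is inside Q
lemma subset_of_meets {k m kq mq : ℤ} (hk : k ≤ kq) (h : (dy k m ∩ dy kq mq).Nonempty) :
    dy k m ⊆ dy kq mq := dy_subset_of_le hk h

lemma dyUp_eq (r : ℕ) (k m : ℤ) : dyUp r k m = dy (k + r) (Int.fdiv m (2^r)) := rfl

-- the r-fold ancestor of a child of I is inside the r-fold ancestor of I... (as sets)
lemma childUp_subset (r : ℕ) (kI mI c : ℤ) (hc : dy (kI - 1) c ⊆ dy kI mI) :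
    dyUp r (kI - 1) c ⊆ dyUp r kI mI := by
  obtain ⟨x, hx⟩ := dy_ne (kI - 1) c
  have h1 : x ∈ dyUp r (kI - 1) c := dy_subset_dyUp r _ _ hx
  have h2 : x ∈ dyUp r kI mI := dy_subset_dyUp r kI mI (hc hx)
  rw [dyUp_eq] at *
  exact dy_subset_of_le (by omega) ⟨x, h1, h2⟩
-- PART 5 : core vanishing lemma for part (a)
section Core
variable {σ ω : Measure ℝ} [IsLocallyFiniteMeasure σ] [IsLocallyFiniteMeasure ω]

lemma wl_vanish (P : FormalPair σ ω) {r : ℕ} (hWL : WL P r) (kI mI : ℤ) :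
    ∀ k m : ℤ, dy k m ∩ dyUp r kI mI = ∅ →
      ∫ x in dy k m, P.T (haarW σ kI mI) x ∂ω = 0 := by
  classical
  set g : ℝ → ℝ := P.T (haarW σ kI mI) with hgdef
  have hg : MemLp g 2 ω := P.memT _ (haar_mem_span σ kI mI)
  by_cases hdeg : σ (dyL kI mI) ≠ 0 ∧ σ (dyR kI mI) ≠ 0
  case neg =>
    have hzero : haarW σ kI mI = 0 := by rw [haarW, if_neg hdeg]
    intro k m _
    have : g = 0 := by rw [hgdef, hzero, map_zero]
    rw [this]
    simp
  -- interval disjoint from Q of scale ≤ kI + r stays disjoint after nesting tricks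
  have hQne : (dy kI mI).Nonempty := dy_ne kI mI
  have hIQ : dy kI mI ⊆ dyUp r kI mI := dy_subset_dyUp r kI mI
  -- (H1) base scale
  have H1 : ∀ m' : ℤ, dy kI m' ∩ dyUp r kI mI = ∅ →
      ∫ x in dy kI m', g x ∂ω = 0 := by
    intro m' hdis
    have hadj := P.adj (haarW σ kI mI) (haar_mem_span σ kI mI)
      ((dy kI m').indicator 1) (ind_mem_span kI m')
    have e1 : ∫ x in dy kI m', g x ∂ω = ∫ x, g x * (dy kI m').indicator 1 x ∂ω :=
      (ip_ind g (measurableSet_dy kI m')).symm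
    have hwl := (hWL kI m' kI mI (le_scale_of_le (by omega)) ?_).2
    · rw [e1, hadj, ← hwl, ip]
      exact integral_congr_ae (Filter.Eventually.of_forall fun x => by simp [mul_comm])
    · left
      intro hsub
      -- dy kI mI ⊆ dyUp r kI m' forces dyUp r kI m' = dyUp r kI mI
      obtain ⟨x, hx⟩ := hQne
      have hx1 : x ∈ dyUp r kI m' := hsub hx
      have hx2 : x ∈ dyUp r kI mI := hIQ hx
      rw [dyUp_eq] at hx1 hx2
      have heq : Int.fdiv m' (2^r) = Int.fdiv mI (2^r) := by
        by_contra hne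
        have := dy_disjoint hne (k := kI + r)
        have hmem : x ∈ dy (kI + r) (Int.fdiv m' (2^r)) ∩ dy (kI + r) (Int.fdiv mI (2^r)) :=
          ⟨hx1, hx2⟩
        rw [this] at hmem
        exact hmem
      obtain ⟨y, hy⟩ := dy_ne kI m'
      have : y ∈ dy kI m' ∩ dyUp r kI mI := by
        refine ⟨hy, ?_⟩
        rw [dyUp_eq, ← heq]
        exact dy_subset_fdiv kI m' r hy
      rw [hdis] at this
      exact this
  -- (H2) Haar pairing vanishes for disjoint intervals of scale ≤ kI
  have H2 : ∀ k' m' : ℤ, k' ≤ kI → dy k' m' ∩ dyUp r kI mI = ∅ →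
      ∫ x, g x * haarW ω k' m' x ∂ω = 0 := by
    intro k' m' hk' hdis
    have hL : dyL kI mI ⊆ dy kI mI := by
      rw [dy_union_halves kI mI]; exact Set.subset_union_left
    have hR : dyR kI mI ⊆ dy kI mI := by
      rw [dy_union_halves kI mI]; exact Set.subset_union_right
    have hnotsub : ∀ c : ℤ, dy (kI - 1) c ⊆ dy kI mI →
        ip ω (P.T ((dy (kI-1) c).indicator 1)) (haarW ω k' m') = 0 := by
      intro c hc
      refine (hWL (kI-1) c k' m' (le_scale_of_le (by omega)) ?_).1
      left
      intro hsub
      obtain ⟨y, hy⟩ := dy_ne k' m'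
      have : y ∈ dy k' m' ∩ dyUp r kI mI :=
        ⟨hy, childUp_subset r kI mI c hc (hsub hy)⟩
      rw [hdis] at this
      exact this
    -- expand haarW σ kI mI
    have hcomb := haar_eq_comb σ kI mI hdeg
    set a := Real.sqrt ((σ (dyL kI mI)).toReal / ((σ (dy kI mI)).toReal * (σ (dyR kI mI)).toReal))
    set b := Real.sqrt ((σ (dyR kI mI)).toReal / ((σ (dy kI mI)).toReal * (σ (dyL kI mI)).toReal))
    have hT : g = a • P.T ((dyR kI mI).indicator 1) - b • P.T ((dyL kI mI).indicator 1) := by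
      rw [hgdef, hcomb, map_sub, P.T.map_smul, P.T.map_smul]
    have hiR : Integrable (fun x => P.T ((dyR kI mI).indicator 1) x * haarW ω k' m' x) ω :=
      integrable_mul_supp (P.memT _ (ind_mem_span (kI-1) (2*mI+1))) k' m'
        (haar_meas ω k' m') (haar_bdd ω k' m') (fun _ hx => haar_supp hx)
    have hiL : Integrable (fun x => P.T ((dyL kI mI).indicator 1) x * haarW ω k' m' x) ω :=
      integrable_mul_supp (P.memT _ (ind_mem_span (kI-1) (2*mI))) k' m'
        (haar_meas ω k' m') (haar_bdd ω k' m') (fun _ hx => haar_supp hx)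
    have e1 : ∫ x, g x * haarW ω k' m' x ∂ω
        = a * ∫ x, P.T ((dyR kI mI).indicator 1) x * haarW ω k' m' x ∂ω
          - b * ∫ x, P.T ((dyL kI mI).indicator 1) x * haarW ω k' m' x ∂ω := by
      rw [hT]
      rw [← MeasureTheory.integral_const_mul, ← MeasureTheory.integral_const_mul,
        ← integral_sub (hiR.const_mul a) (hiL.const_mul b)]
      exact integral_congr_ae (Filter.Eventually.of_forall fun x => by
        simp [Pi.sub_apply, Pi.smul_apply, smul_eq_mul]; ring)
    have z1 : (∫ x, P.T ((dyR kI mI).indicator 1) x * haarW ω k' m' x ∂ω) = 0 :=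
      hnotsub (2*mI+1) hR
    have z2 : (∫ x, P.T ((dyL kI mI).indicator 1) x * haarW ω k' m' x ∂ω) = 0 :=
      hnotsub (2*mI) hL
    rw [e1, z1, z2]
    ring
  -- (H3) downward induction
  have H3 : ∀ n : ℕ, ∀ m' : ℤ, dy (kI - n) m' ∩ dyUp r kI mI = ∅ →
      ∫ x in dy (kI - n) m', g x ∂ω = 0 := by
    intro n
    induction n with
    | zero =>
      intro m' h
      simp only [Nat.cast_zero, sub_zero] at h ⊢
      exact H1 m' h
    | succ n IH =>
      intro m' hdis
      have hkk : kI - ((n+1:ℕ):ℤ) + 1 = kI - (n:ℕ) := by push_cast; omega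
      have hpar := subset_parent (kI - ((n+1:ℕ):ℤ)) m'
      have hne' : (dy (kI - ((n+1:ℕ):ℤ)) m').Nonempty := dy_ne _ _
      have hpardis : dy (kI - ((n+1:ℕ):ℤ) + 1) (Int.fdiv m' 2) ∩ dyUp r kI mI = ∅ := by
        by_contra hcon
        rw [← Ne, ← Set.nonempty_iff_ne_empty] at hcon
        have hsub : dy (kI - ((n+1:ℕ):ℤ) + 1) (Int.fdiv m' 2) ⊆ dyUp r kI mI := by
          rw [dyUp_eq] at hcon ⊢
          exact dy_subset_of_le (by omega) hcon
        obtain ⟨y, hy⟩ := hne'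
        have hmem : y ∈ dy (kI - ((n+1:ℕ):ℤ)) m' ∩ dyUp r kI mI := ⟨hy, hsub (hpar hy)⟩
        rw [hdis] at hmem
        exact hmem
      have hIH : ∫ x in dy (kI - ((n+1:ℕ):ℤ) + 1) (Int.fdiv m' 2), g x ∂ω = 0 := by
        rw [hkk]
        exact IH _ (by rw [← hkk]; exact hpardis)
      have hH2 : ∫ x, g x * haarW ω (kI - ((n+1:ℕ):ℤ) + 1) (Int.fdiv m' 2) x ∂ω = 0 :=
        H2 _ _ (by omega) hpardis
      rcases child_of_parent (kI - ((n+1:ℕ):ℤ)) m' with hch | hch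
      · rw [hch]
        obtain ⟨α, β, hab⟩ := setInt_childL (μ := ω) hg (kI - ((n+1:ℕ):ℤ) + 1) (Int.fdiv m' 2)
        rw [hab, hIH, hH2]
        ring
      · rw [hch]
        obtain ⟨α, β, hab⟩ := setInt_childR (μ := ω) hg (kI - ((n+1:ℕ):ℤ) + 1) (Int.fdiv m' 2)
        rw [hab, hIH, hH2]
        ring
  -- (H4) upward induction
  have H4 : ∀ n : ℕ, ∀ m' : ℤ, dy (kI + n) m' ∩ dyUp r kI mI = ∅ →
      ∫ x in dy (kI + n) m', g x ∂ω = 0 := by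
    intro n
    induction n with
    | zero =>
      intro m' h
      simp only [Nat.cast_zero, add_zero] at h ⊢
      exact H1 m' h
    | succ n IH =>
      intro m' hdis
      have hL : dyL (kI + (n+1:ℕ)) m' = dy (kI + n) (2*m') := by
        rw [dyL_eq, show kI + ((n+1:ℕ):ℤ) - 1 = kI + (n:ℕ) from by push_cast; omega]
      have hR : dyR (kI + (n+1:ℕ)) m' = dy (kI + n) (2*m'+1) := by
        rw [dyR_eq, show kI + ((n+1:ℕ):ℤ) - 1 = kI + (n:ℕ) from by push_cast; omega]
      have hsplit := setInt_split (μ := ω) hg (kI + (n+1:ℕ)) m'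
      have hdisL : dy (kI + n) (2*m') ∩ dyUp r kI mI = ∅ := by
        rw [← hL]
        apply Set.eq_empty_of_subset_empty
        rw [← hdis]
        apply Set.inter_subset_inter_left
        rw [dy_union_halves (kI + (n+1:ℕ)) m']
        exact Set.subset_union_left
      have hdisR : dy (kI + n) (2*m'+1) ∩ dyUp r kI mI = ∅ := by
        rw [← hR]
        apply Set.eq_empty_of_subset_empty
        rw [← hdis]
        apply Set.inter_subset_inter_left
        rw [dy_union_halves (kI + (n+1:ℕ)) m']
        exact Set.subset_union_right
      rw [hsplit, hL, hR, IH (2*m') hdisL, IH (2*m'+1) hdisR]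
      ring
  intro k m hdis
  rcases le_or_gt k kI with hk | hk
  · have : k = kI - ((kI - k).toNat : ℕ) := by omega
    rw [this] at hdis ⊢
    exact H3 _ m hdis
  · have : k = kI + ((k - kI).toNat : ℕ) := by omega
    rw [this] at hdis ⊢
    exact H4 _ m hdis

end Core
-- PART 6 : local to global
lemma dyadic_pi : IsPiSystem {S : Set ℝ | ∃ k m : ℤ, S = dy k m} := by
  rintro s ⟨k, m, rfl⟩ t ⟨k', m', rfl⟩ hne
  rcases dy_nest hne with h | h
  · exact ⟨k, m, by rw [Set.inter_eq_self_of_subset_left h]⟩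
  · exact ⟨k', m', by rw [Set.inter_eq_self_of_subset_right h]⟩

lemma borel_eq_dyadic :
    (inferInstance : MeasurableSpace ℝ)
      = MeasurableSpace.generateFrom {S : Set ℝ | ∃ k m : ℤ, S = dy k m} := by
  refine le_antisymm ?_ ?_
  · rw [BorelSpace.measurable_eq (α := ℝ), borel_eq_generateFrom_Iio]
    refine MeasurableSpace.generateFrom_le ?_
    rintro t ⟨a, rfl⟩
    have hEq : Set.Iio a = ⋃ (p : ℤ × ℤ) (_ : dy p.1 p.2 ⊆ Set.Iio a), dy p.1 p.2 := by
      apply Set.Subset.antisymm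
      · intro x hx
        have hd : (0:ℝ) < a - x := sub_pos.mpr (Set.mem_Iio.mp hx)
        obtain ⟨n, hn⟩ := exists_pow_lt_of_lt_one hd (by norm_num : (1:ℝ)/2 < 1)
        have hn' : (2:ℝ)^(-(n:ℤ)) < a - x := by
          have : ((1:ℝ)/2)^n = (2:ℝ)^(-(n:ℤ)) := by
            rw [zpow_neg, ← zpow_natCast]
            simp [one_div, inv_zpow]
          rwa [this] at hn
        set k : ℤ := -(n:ℤ)
        set m : ℤ := ⌊x / 2^k⌋
        have hmem : x ∈ dy k m := mem_dy_iff'.mpr rfl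
        have hsub : dy k m ⊆ Set.Iio a := by
          intro y hy
          rw [dy, Set.mem_Ico] at hy
          have h1 : (2:ℝ)^k * m ≤ x := by
            have := Int.floor_le (x / 2^k)
            have h2 := two_zpow_pos' k
            rw [← le_div_iff₀' h2]
            exact this
          have h2 := two_zpow_pos' k
          have : y < 2^k * m + 2^k := by nlinarith [hy.2]
          have : y < x + 2^k := by nlinarith
          exact lt_of_lt_of_le (by nlinarith [hn']) (le_refl a)
        exact Set.mem_iUnion.mpr ⟨⟨k, m⟩, Set.mem_iUnion.mpr ⟨hsub, hmem⟩⟩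
      · intro x hx
        obtain ⟨p, hp⟩ := Set.mem_iUnion.mp hx
        obtain ⟨hsub, hmem⟩ := Set.mem_iUnion.mp hp
        exact hsub hmem
    rw [hEq]
    exact MeasurableSet.iUnion fun p => MeasurableSet.iUnion fun _ =>
      MeasurableSpace.measurableSet_generateFrom ⟨p.1, p.2, rfl⟩
  · refine MeasurableSpace.generateFrom_le ?_
    rintro t ⟨k, m, rfl⟩
    exact measurableSet_dy k m
-- diff lemma
lemma setInt_diff_zero [IsLocallyFiniteMeasure μ] {g : ℝ → ℝ} (hg : MemLp g 2 μ)
    (kq mq : ℤ)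
    (h0 : ∀ k m : ℤ, dy k m ∩ dy kq mq = ∅ → ∫ x in dy k m, g x ∂μ = 0) :
    ∀ k m : ℤ, ∫ x in dy k m \ dy kq mq, g x ∂μ = 0 := by
  have hsmall : ∀ k m : ℤ, k ≤ kq → ∫ x in dy k m \ dy kq mq, g x ∂μ = 0 := by
    intro k m hk
    rcases Set.eq_empty_or_nonempty (dy k m ∩ dy kq mq) with hdis | hne
    · have hself : dy k m \ dy kq mq = dy k m := by
        ext y
        constructor
        · exact fun h => h.1
        · intro h
          refine ⟨h, fun hq => ?_⟩
          have : y ∈ dy k m ∩ dy kq mq := ⟨h, hq⟩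
          rw [hdis] at this
          exact this
      rw [hself]
      exact h0 k m hdis
    · have hsub : dy k m ⊆ dy kq mq := dy_subset_of_le hk hne
      rw [Set.diff_eq_empty.mpr hsub]
      simp
  have hbig : ∀ n : ℕ, ∀ m : ℤ, ∫ x in dy (kq + n) m \ dy kq mq, g x ∂μ = 0 := by
    intro n
    induction n with
    | zero =>
      intro m
      simp only [Nat.cast_zero, add_zero]
      exact hsmall kq m (le_refl _)
    | succ n IH =>
      intro m
      have hL : dyL (kq + (n+1:ℕ)) m = dy (kq + n) (2*m) := by
        rw [dyL_eq, show kq + ((n+1:ℕ):ℤ) - 1 = kq + (n:ℕ) from by push_cast; omega]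
      have hR : dyR (kq + (n+1:ℕ)) m = dy (kq + n) (2*m+1) := by
        rw [dyR_eq, show kq + ((n+1:ℕ):ℤ) - 1 = kq + (n:ℕ) from by push_cast; omega]
      have hsplit : dy (kq + (n+1:ℕ)) m \ dy kq mq
          = (dy (kq + n) (2*m) \ dy kq mq) ∪ (dy (kq + n) (2*m+1) \ dy kq mq) := by
        rw [dy_union_halves (kq + (n+1:ℕ)) m, hL, hR, Set.union_diff_distrib]
      rw [hsplit]
      have hdisj : Disjoint (dy (kq + n) (2*m) \ dy kq mq) (dy (kq + n) (2*m+1) \ dy kq mq) := by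
        refine Set.disjoint_of_subset Set.diff_subset Set.diff_subset ?_
        rw [Set.disjoint_iff_inter_eq_empty]
        exact dy_disjoint (by omega)
      rw [setIntegral_union hdisj ((measurableSet_dy _ _).diff (measurableSet_dy _ _))
        ((intOn hg _ _).mono_set Set.diff_subset) ((intOn hg _ _).mono_set Set.diff_subset),
        IH (2*m), IH (2*m+1)]
      ring
  intro k m
  rcases le_or_gt k kq with hk | hk
  · exact hsmall k m hk
  · have : k = kq + ((k - kq).toNat : ℕ) := by omega
    rw [this]
    exact hbig _ m

lemma vanish_outside [IsLocallyFiniteMeasure μ] {g : ℝ → ℝ} (hg : MemLp g 2 μ)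
    (kq mq : ℤ)
    (h0 : ∀ k m : ℤ, dy k m ∩ dy kq mq = ∅ → ∫ x in dy k m, g x ∂μ = 0) :
    ∀ᵐ x ∂μ, x ∉ dy kq mq → g x = 0 := by
  have hdiff := setInt_diff_zero hg kq mq h0
  set φ : ℝ → ℝ := (dy kq mq)ᶜ.indicator g with hφdef
  have hφdy : ∀ k m : ℤ, ∫ x in dy k m, φ x ∂μ = 0 := by
    intro k m
    rw [hφdef, setIntegral_indicator (measurableSet_dy kq mq).compl, ← Set.diff_eq]
    exact hdiff k m
  have main : ∀ kb mb : ℤ, ∀ᵐ x ∂μ, x ∈ dy kb mb → (x ∉ dy kq mq → g x = 0) := by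
    intro kb mb
    set ν := μ.restrict (dy kb mb) with hν
    haveI : IsFiniteMeasure ν :=
      ⟨by rw [hν, Measure.restrict_apply_univ]; exact meas_dy_lt_top kb mb⟩
    have hgν : Integrable g ν := (hg.restrict _).integrable one_le_two
    have hφ : Integrable φ ν := hgν.indicator (measurableSet_dy kq mq).compl
    have hbasic : ∀ k m : ℤ, ∫ x in dy k m, φ x ∂ν = 0 := by
      intro k m
      have e : ∫ x in dy k m, φ x ∂ν = ∫ x in dy k m ∩ dy kb mb, φ x ∂μ := by
        rw [hν, Measure.restrict_restrict (measurableSet_dy k m)]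
      rw [e]
      rcases Set.eq_empty_or_nonempty (dy k m ∩ dy kb mb) with hemp | hne
      · rw [hemp]
        simp
      · rcases dy_nest hne with h | h
        · rw [Set.inter_eq_self_of_subset_left h]
          exact hφdy k m
        · rw [Set.inter_eq_self_of_subset_right h]
          exact hφdy kb mb
    have htotal : ∫ x, φ x ∂ν = 0 := by
      have : ∫ x, φ x ∂ν = ∫ x in dy kb mb, φ x ∂μ := by rw [hν]
      rw [this]
      exact hφdy kb mb
    have hind : ∀ ⦃A : Set ℝ⦄, MeasurableSet A → ∫ x in A, φ x ∂ν = 0 := by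
      refine MeasurableSpace.induction_on_inter borel_eq_dyadic dyadic_pi ?_ ?_ ?_ ?_
      · simp
      · rintro t ⟨k, m, rfl⟩
        exact hbasic k m
      · intro t htm ht
        have hadd := integral_add_compl htm hφ
        rw [ht, zero_add] at hadd
        rw [hadd, htotal]
      · intro f hdisj hmeas hzero
        rw [integral_iUnion hmeas hdisj hφ.integrableOn]
        simp only [hzero]
        exact tsum_zero
    have hae : φ =ᵐ[ν] 0 :=
      hφ.ae_eq_zero_of_forall_setIntegral_eq_zero (fun s hs _ => hind hs)
    have := (ae_restrict_iff' (measurableSet_dy kb mb)).mp hae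
    filter_upwards [this] with x hx hxb hxq
    have := hx hxb
    rwa [hφdef, Set.indicator_of_mem (Set.mem_compl hxq)] at this
  have hall : ∀ᵐ x ∂μ, ∀ n : ℕ,
      (x ∈ dy n 0 → (x ∉ dy kq mq → g x = 0)) ∧
      (x ∈ dy n (-1) → (x ∉ dy kq mq → g x = 0)) :=
    ae_all_iff.mpr fun n => ((main n 0).and (main n (-1)))
  filter_upwards [hall] with x hx hxq
  have hpow : ∀ n : ℕ, (2:ℝ)^(n:ℤ) = ((2^n : ℕ) : ℝ) := by
    intro n
    rw [zpow_natCast]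
    push_cast
    ring
  rcases le_or_gt 0 x with hx0 | hx0
  · obtain ⟨n, hn⟩ := exists_nat_gt x
    have hmem : x ∈ dy n 0 := by
      rw [dy, Set.mem_Ico]
      constructor
      · push_cast
        simp only [mul_zero]
        exact hx0
      · have h1 : (n:ℝ) ≤ (2:ℝ)^(n:ℤ) := by
          rw [hpow n]
          exact_mod_cast le_of_lt (Nat.lt_two_pow_self (n := n))
        push_cast
        nlinarith
    exact (hx n).1 hmem hxq
  · obtain ⟨n, hn⟩ := exists_nat_gt (-x)
    have hmem : x ∈ dy n (-1) := by
      rw [dy, Set.mem_Ico]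
      have h1 : (n:ℝ) ≤ (2:ℝ)^(n:ℤ) := by
        rw [hpow n]
        exact_mod_cast le_of_lt (Nat.lt_two_pow_self (n := n))
      constructor
      · push_cast
        nlinarith
      · push_cast
        nlinarith
    exact (hx n).2 hmem hxq
-- PART 7 : swap, part (b), assembly
section Final
variable {σ ω : Measure ℝ}

def FormalPair.swap (P : FormalPair σ ω) : FormalPair ω σ where
  T := P.Ts
  Ts := P.T
  memT := P.memTs
  memTs := P.memT
  adj := fun f hf g hg => by
    have := P.adj g hg f hf
    calc ∫ x, P.Ts f x * g x ∂σ = ∫ x, g x * P.Ts f x ∂σ := by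
          exact integral_congr_ae (Filter.Eventually.of_forall fun x => mul_comm _ _)
      _ = ∫ x, P.T g x * f x ∂ω := this.symm
      _ = ∫ x, f x * P.T g x ∂ω :=
          integral_congr_ae (Filter.Eventually.of_forall fun x => mul_comm _ _)

lemma WL.swap {P : FormalPair σ ω} {r : ℕ} (h : WL P r) : WL P.swap r :=
  fun kJ mJ kI mI hs hd => ⟨(h kJ mJ kI mI hs hd).2, (h kJ mJ kI mI hs hd).1⟩

lemma EWL.swap {P : FormalPair σ ω} {r : ℕ} (h : EWL P r) : EWL P.swap r :=
  fun k m => ⟨(h k m).2, (h k m).1⟩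

variable [IsLocallyFiniteMeasure σ] [IsLocallyFiniteMeasure ω]

lemma ewl_side (P : FormalPair σ ω) {r : ℕ} (hWL : WL P r) (kI mI : ℤ) :
    ∀ᵐ x ∂ω, x ∉ dyUp r kI mI → P.T (haarW σ kI mI) x = 0 := by
  have h := vanish_outside (μ := ω) (P.memT _ (haar_mem_span σ kI mI))
    (kI + r) (Int.fdiv mI (2^r)) (fun k m hdis => wl_vanish P hWL kI mI k m hdis)
  exact h

lemma wl_side (P : FormalPair σ ω) {r : ℕ}
    (hE : ∀ kI mI : ℤ, ∀ᵐ x ∂σ, x ∉ dyUp r kI mI → P.Ts (haarW ω kI mI) x = 0)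
    (kJ mJ kI mI : ℤ) (hsize : (2:ℝ)^kI ≤ 2 * (2:ℝ)^kJ)
    (hcond : (¬ dy kI mI ⊆ dyUp (r+1) kJ mJ) ∨
      ((2:ℝ)^kI ≤ (2:ℝ)^(-((r+1:ℕ):ℤ)) * (2:ℝ)^kJ ∧ ¬ dy kI mI ⊆ dy kJ mJ)) :
    ip ω (P.T ((dy kJ mJ).indicator 1)) (haarW ω kI mI) = 0 := by
  have hk1 : kI ≤ kJ + 1 := scale_le_of_le hsize
  -- J is disjoint from U := dyUp r kI mI
  have hdis : dy kJ mJ ∩ dyUp r kI mI = ∅ := by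
    rcases hcond with hcond | ⟨hc1, hc2⟩
    · by_contra hcon
      rw [← Ne, ← Set.nonempty_iff_ne_empty] at hcon
      apply hcond
      rw [dyUp_eq] at hcon
      rcases dy_nest hcon with h | h
      · -- J ⊆ U ; then U ⊆ J^{(r+1)}
        have hsub : dy (kI + r) (Int.fdiv mI (2^r)) ⊆ dyUp (r+1) kJ mJ := by
          obtain ⟨y, hy⟩ := dy_ne kJ mJ
          rw [dyUp_eq]
          refine dy_subset_of_le (by omega) ⟨y, h hy, ?_⟩
          rw [← dyUp_eq]
          exact dy_subset_dyUp (r+1) kJ mJ hy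
        exact fun x hx => hsub ((dy_subset_dyUp r kI mI) hx)
      · -- U ⊆ J
        exact fun x hx => (dy_subset_dyUp (r+1) kJ mJ) (h ((dy_subset_dyUp r kI mI) hx))
    · have hk2 : kI + (r+1:ℕ) ≤ kJ := scale_le_of_neg hc1
      by_contra hcon
      rw [← Ne, ← Set.nonempty_iff_ne_empty] at hcon
      apply hc2
      rw [dyUp_eq] at hcon
      have hsub : dy (kI + r) (Int.fdiv mI (2^r)) ⊆ dy kJ mJ :=
        dy_subset_of_le (by push_cast at hk2 ⊢; omega) (by rwa [Set.inter_comm] at hcon)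
      exact fun x hx => hsub ((dy_subset_dyUp r kI mI) hx)
  -- use adjointness
  have hadj := P.adj ((dy kJ mJ).indicator 1) (ind_mem_span kJ mJ)
    (haarW ω kI mI) (haar_mem_span ω kI mI)
  rw [ip, hadj]
  have e1 : ∫ x, (dy kJ mJ).indicator 1 x * P.Ts (haarW ω kI mI) x ∂σ
      = ∫ x in dy kJ mJ, P.Ts (haarW ω kI mI) x ∂σ := by
    rw [← ip_ind (P.Ts (haarW ω kI mI)) (measurableSet_dy kJ mJ)]
    exact integral_congr_ae (Filter.Eventually.of_forall fun x => mul_comm _ _)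
  rw [e1]
  have hzero : ∀ᵐ x ∂σ.restrict (dy kJ mJ), P.Ts (haarW ω kI mI) x = 0 := by
    filter_upwards [ae_restrict_of_ae (hE kI mI), ae_restrict_mem (measurableSet_dy kJ mJ)]
      with x h1 h2
    refine h1 fun hu => ?_
    have : x ∈ dy kJ mJ ∩ dyUp r kI mI := ⟨h2, hu⟩
    rw [hdis] at this
    exact this
  exact integral_eq_zero_of_ae hzero

end Final

/-- Well localized with parameter `r ≥ 1` implies essentially well localized with
parameter `r`; essentially well localized with parameter `r` implies well localized with
parameter `r + 1`. -/
theorem well_localized_iff_essentially_well_localized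
    (σ ω : Measure ℝ) [IsLocallyFiniteMeasure σ] [IsLocallyFiniteMeasure ω]
    (P : FormalPair σ ω) :
    (∀ r : ℕ, 1 ≤ r → WL P r → EWL P r) ∧
    (∀ r : ℕ, EWL P r → WL P (r + 1)) := by
  constructor
  · intro r _ hWL k m
    exact ⟨ewl_side P hWL k m, ewl_side P.swap hWL.swap k m⟩
  · intro r hE kJ mJ kI mI hsize hcond
    have hcond' : (¬ dy kI mI ⊆ dyUp (r+1) kJ mJ) ∨
        ((2:ℝ)^kI ≤ (2:ℝ)^(-((r+1:ℕ):ℤ)) * (2:ℝ)^kJ ∧ ¬ dy kI mI ⊆ dy kJ mJ) := hcond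
    exact ⟨wl_side P (fun k m => (hE k m).2) kJ mJ kI mI hsize hcond',
      wl_side P.swap (fun k m => (hE.swap k m).2) kJ mJ kI mI hsize hcond'⟩

end
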